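/- arXiv:2504.07284 — 2 statements merged into one kernel-verified Lean document; each statement's English description precedes it below -/
import Mathlib

section
/- Let r ≥ 3 be an integer and let α ∈ (0, 1/r). Then there exist a constant c > 0 and a sequence (G*_n) of balanced r-partite graphs on rn vertices with δ*(G*_n) ≥ αn such that if p = p(n) ≤ c n^{-2/r}, then with high probability G*_n ∪ G_r(n,p) contains no perfect K_r-tiling. (One such G*_n: split each class V_i = A_i ⊔ B_i with |A_i| = αn and |B_i| = (1−α)n, include all edges between A_i and A_j and between A_i and B_j for all i ≠ j, and no edges between B_i and B_j.) -/
/-!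
Take `G*_n` with `|A_i| = ⌈αn⌉`. The parts `B_i` span no edge of `G*_n`, so in a perfect
`K_r`-tiling of `G*_n ∪ G_r(n,p)` every tile avoiding `⋃ A_i` is a transversal `r`-clique of the
random graph; as the tiles are disjoint, at most `r⌈αn⌉` of them meet `⋃ A_i`. Hence the random
graph contains `m = n - r⌈αn⌉ ≥ (1 - rα)n/2` vertex-disjoint transversal `r`-cliques. The
expected number of ordered such families is at most `n^{rm} p^{m·C(r,2)} ≤ (cn)^m`, and every
unordered family is counted `m!` times, so the probability is at most `(cn)^m / m! ≤ 2^{-m}` for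
`c = (1 - rα)/12`.
-/

open MeasureTheory Filter Finset
open scoped Classical

abbrev MV (r n : ℕ) := Fin r × Fin n

noncomputable def bernoulliMeasure (p : ℝ) : Measure Bool :=
  ENNReal.ofReal p • Measure.dirac true + ENNReal.ofReal (1 - p) • Measure.dirac false

noncomputable def grpMeasure (r n : ℕ) (p : ℝ) :
    Measure (Sym2 (MV r n) → Bool) :=
  Measure.pi fun _ => bernoulliMeasure p

def sampleGraph (r n : ℕ) (ω : Sym2 (MV r n) → Bool) : SimpleGraph (MV r n) where
  Adj u v := u.1 ≠ v.1 ∧ ω s(u, v) = true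
  symm := ⟨fun u v h => ⟨h.1.symm, by rw [Sym2.eq_swap]; exact h.2⟩⟩
  loopless := ⟨fun u h => h.1 rfl⟩

def sampleGraphTail (r n : ℕ) (ω : Sym2 (MV r n) → Bool) : SimpleGraph (MV r n) where
  Adj u v := u.1 ≠ v.1 ∧ u.1.val ≠ 0 ∧ v.1.val ≠ 0 ∧ ω s(u, v) = true
  symm := ⟨fun u v h => ⟨h.1.symm, h.2.2.1, h.2.1, by rw [Sym2.eq_swap]; exact h.2.2.2⟩⟩
  loopless := ⟨fun u h => h.1 rfl⟩

def IsMultipartite (r n : ℕ) (G : SimpleGraph (MV r n)) : Prop :=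
  ∀ u v, G.Adj u v → u.1 ≠ v.1

noncomputable def classFinset (r n : ℕ) (i : ℕ) : Finset (MV r n) :=
  Finset.univ.filter (fun v => v.1.val = i)

noncomputable def degIn (r n : ℕ) (G : SimpleGraph (MV r n)) (v : MV r n) (j : Fin r) : ℕ :=
  Set.ncard {u : MV r n | u.1 = j ∧ G.Adj v u}

def MinDegCond (r n : ℕ) (G : SimpleGraph (MV r n)) (a : ℝ) : Prop :=
  ∀ v : MV r n, ∀ j : Fin r, j ≠ v.1 → a ≤ (degIn r n G v j : ℝ)

def IsKrTiling {W : Type*} (G : SimpleGraph W) (r : ℕ) (T : Finset (Finset W)) : Prop :=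
  (∀ t ∈ T, t.card = r ∧ G.IsClique (t : Set W)) ∧
  (T : Set (Finset W)).PairwiseDisjoint id

def HasPerfectKrTiling {W : Type*} (G : SimpleGraph W) (r : ℕ) : Prop :=
  ∃ T : Finset (Finset W), IsKrTiling G r T ∧ ∀ v : W, ∃ t ∈ T, v ∈ t

noncomputable def relDensity {A B : Type*} (R : A → B → Prop) (s : Finset A) (t : Finset B) : ℝ :=
  (Set.ncard {p : A × B | p.1 ∈ s ∧ p.2 ∈ t ∧ R p.1 p.2} : ℝ) / ((s.card : ℝ) * (t.card : ℝ))

def IsRegularPairR {A B : Type*} (R : A → B → Prop) (ε : ℝ) (s : Finset A) (t : Finset B) : Prop :=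
  ∀ X ⊆ s, ∀ Y ⊆ t, ε * s.card ≤ X.card → ε * t.card ≤ Y.card →
    |relDensity R s t - relDensity R X Y| < ε

def IsSuperRegularR {A B : Type*} (R : A → B → Prop) (ε d : ℝ) (s : Finset A) (t : Finset B) : Prop :=
  (∀ X ⊆ s, ∀ Y ⊆ t, ε * s.card ≤ X.card → ε * t.card ≤ Y.card → d < relDensity R X Y) ∧
  (∀ a ∈ s, d * t.card < (Set.ncard {b | b ∈ t ∧ R a b} : ℝ)) ∧
  (∀ b ∈ t, d * s.card < (Set.ncard {a | a ∈ s ∧ R a b} : ℝ))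

def IsTupleF (r n : ℕ) (G : SimpleGraph (MV r n)) (d : ℝ)
    (g : {k : Fin r // k.val ≠ 0} → MV r n) : Prop :=
  (∀ k, (g k).1 = k.1) ∧
  ((d/2)^(r-1) * n ≤ (Set.ncard {u : MV r n | u.1.val = 0 ∧ ∀ k, G.Adj u (g k)} : ℝ))

open scoped ENNReal Nat

instance (p : ℝ) : IsFiniteMeasure (bernoulliMeasure p) :=
  ⟨by simp [bernoulliMeasure, ENNReal.add_lt_top]⟩

lemma isProbabilityMeasure_bernoulliMeasure {p : ℝ} (h0 : 0 ≤ p) (h1 : p ≤ 1) :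
    IsProbabilityMeasure (bernoulliMeasure p) := by
  constructor
  simp [bernoulliMeasure, ← ENNReal.ofReal_add h0 (sub_nonneg.2 h1)]

lemma isProbabilityMeasure_grpMeasure (r n : ℕ) {p : ℝ} (h0 : 0 ≤ p) (h1 : p ≤ 1) :
    IsProbabilityMeasure (grpMeasure r n p) := by
  have := isProbabilityMeasure_bernoulliMeasure h0 h1
  unfold grpMeasure; infer_instance

lemma grpMeasure_forall_true (r n : ℕ) {p : ℝ} (h0 : 0 ≤ p) (h1 : p ≤ 1)
    (E : Finset (Sym2 (MV r n))) :
    grpMeasure r n p {ω | ∀ e ∈ E, ω e = true} = ENNReal.ofReal p ^ #E := by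
  have := isProbabilityMeasure_bernoulliMeasure h0 h1
  have hset : {ω : Sym2 (MV r n) → Bool | ∀ e ∈ E, ω e = true} =
      Set.univ.pi fun e => if e ∈ E then {true} else Set.univ := by
    ext ω; simp only [Set.mem_univ_pi]
    exact ⟨fun h e => by split_ifs with he <;> simp [h e, *], fun h e he => by simpa [he] using h e⟩
  have hfactor : ∀ e, bernoulliMeasure p (if e ∈ E then {true} else Set.univ) =
      if e ∈ E then ENNReal.ofReal p else 1 := fun e => by
    split_ifs
    · simp [bernoulliMeasure]
    · exact measure_univ
  rw [hset, grpMeasure, Measure.pi_pi]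
  simp only [hfactor, Finset.prod_ite_mem, Finset.univ_inter, Finset.prod_const]

lemma natCast_mul_measure_le_sum_measure {Ω ι : Type*} [MeasurableSpace Ω] (μ : Measure Ω)
    (S : Finset ι) {A : ι → Set Ω} (hA : ∀ i ∈ S, MeasurableSet (A i)) {B : Set Ω} {k : ℕ}
    (hB : ∀ ω ∈ B, k ≤ #{i ∈ S | ω ∈ A i}) :
    k * μ B ≤ ∑ i ∈ S, μ (A i) := by
  set f : Ω → ℝ≥0∞ := fun ω => ∑ i ∈ S, (A i).indicator 1 ω
  have hf : ∀ ω, f ω = #{i ∈ S | ω ∈ A i} := fun ω => by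
    simp [f, Set.indicator_apply, Finset.sum_boole]
  calc (k : ℝ≥0∞) * μ B ≤ k * μ {ω | (k : ℝ≥0∞) ≤ f ω} := by
        gcongr
        exact fun ω hω => by simpa [hf] using hB ω hω
    _ ≤ ∫⁻ ω, f ω ∂μ := mul_meas_ge_le_lintegral₀ (Finset.aemeasurable_fun_sum _ fun i hi =>
        (measurable_one.indicator (hA i hi)).aemeasurable) _
    _ = ∑ i ∈ S, μ (A i) := by
        rw [lintegral_finsetSum' _ fun i hi => (measurable_one.indicator (hA i hi)).aemeasurable]
        exact Finset.sum_congr rfl fun i hi => lintegral_indicator_one (hA i hi)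

section TransversalFamily

variable {r n m : ℕ}

/-- `F : Fin m → Fin r → Fin n` encodes the `m` transversal `r`-sets `{(i, F a i) | i : Fin r}`. -/
def IsDisjointFamily (F : Fin m → Fin r → Fin n) : Prop :=
  ∀ a b, a ≠ b → ∀ i, F a i ≠ F b i

def transversalEdges (F : Fin m → Fin r → Fin n) : Finset (Sym2 (MV r n)) :=
  univ.biUnion fun a => (univ.offDiag.image Sym2.mk.uncurry).image (Sym2.map fun i => (i, F a i))

lemma mem_transversalEdges {F : Fin m → Fin r → Fin n} {e : Sym2 (MV r n)} :
    e ∈ transversalEdges F ↔ ∃ a i j, i ≠ j ∧ s(((i, F a i) : MV r n), (j, F a j)) = e := by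
  simp [transversalEdges]

lemma transversalEdges_comp_perm (F : Fin m → Fin r → Fin n) (σ : Equiv.Perm (Fin m)) :
    transversalEdges (F ∘ σ) = transversalEdges F := by
  ext e
  simp only [mem_transversalEdges, Function.comp_apply]
  exact ⟨fun ⟨a, h⟩ => ⟨σ a, h⟩, fun ⟨a, h⟩ => ⟨σ.symm a, by simpa using h⟩⟩

lemma card_transversalEdges {F : Fin m → Fin r → Fin n} (hF : IsDisjointFamily F) :
    #(transversalEdges F) = m * r.choose 2 := by
  rw [transversalEdges, card_biUnion]
  · have hclique : ∀ a, #((univ.offDiag.image Sym2.mk.uncurry).image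
        (Sym2.map fun i => ((i, F a i) : MV r n))) = r.choose 2 := fun a => by
      rw [card_image_of_injective _ (Sym2.map.injective fun i j h => congrArg Prod.fst h),
        Sym2.card_image_offDiag, card_univ, Fintype.card_fin]
    simp [hclique]
  · intro a _ b _ hab
    refine disjoint_left.2 fun e hea heb => ?_
    obtain ⟨x, -, rfl⟩ := mem_image.1 hea
    obtain ⟨y, -, hy⟩ := mem_image.1 heb
    obtain ⟨i, hi⟩ : ∃ i, i ∈ x := ⟨x.out.1, Sym2.out_fst_mem x⟩
    obtain ⟨j, -, hj⟩ := Sym2.mem_map.1 (hy ▸ Sym2.mem_map.2 ⟨i, hi, rfl⟩)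
    obtain ⟨rfl, h⟩ := Prod.mk.inj hj
    exact hF a b hab j h.symm

def cliqueFamilyEvent (r n m : ℕ) : Set (Sym2 (MV r n) → Bool) :=
  {ω | ∃ F : Fin m → Fin r → Fin n, IsDisjointFamily F ∧ ∀ e ∈ transversalEdges F, ω e = true}

lemma factorial_mul_grpMeasure_cliqueFamilyEvent_le (hr : 0 < r) {p : ℝ} (h0 : 0 ≤ p)
    (h1 : p ≤ 1) :
    m ! * grpMeasure r n p (cliqueFamilyEvent r n m)
      ≤ n ^ (r * m) * ENNReal.ofReal p ^ (m * r.choose 2) := by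
  set S : Finset (Fin m → Fin r → Fin n) := {F | IsDisjointFamily F}
  set A : (Fin m → Fin r → Fin n) → Set (Sym2 (MV r n) → Bool) :=
    fun F => {ω | ∀ e ∈ transversalEdges F, ω e = true}
  have hcount : ∀ ω ∈ cliqueFamilyEvent r n m, m ! ≤ #{F ∈ S | ω ∈ A F} := by
    rintro ω ⟨F, hF, hω⟩
    have hinj : Function.Injective F := fun a b hab => by
      by_contra hne; exact hF a b hne ⟨0, hr⟩ (by rw [hab])
    calc m ! = #(univ : Finset (Equiv.Perm (Fin m))) := by simp [Fintype.card_perm]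
      _ ≤ #{F ∈ S | ω ∈ A F} := by
        refine card_le_card_of_injOn (fun σ => F ∘ σ) (fun σ _ => ?_)
          fun σ _ τ _ h => Equiv.ext fun a => hinj (congrFun h a)
        refine mem_coe.2 (mem_filter.2 ⟨mem_filter.2 ⟨mem_univ _, ?_⟩, ?_⟩)
        · exact fun a b hab => hF (σ a) (σ b) (σ.injective.ne hab)
        · exact fun e he => hω e (transversalEdges_comp_perm F σ ▸ he)
  calc (m ! : ℝ≥0∞) * grpMeasure r n p (cliqueFamilyEvent r n m)
      ≤ ∑ F ∈ S, grpMeasure r n p (A F) :=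
        natCast_mul_measure_le_sum_measure _ S (fun _ _ => (Set.toFinite _).measurableSet)
          fun ω hω => by convert hcount ω hω
    _ = ∑ _F ∈ S, ENNReal.ofReal p ^ (m * r.choose 2) := sum_congr rfl fun F hF => by
        rw [grpMeasure_forall_true r n h0 h1, card_transversalEdges (mem_filter.1 hF).2]
    _ ≤ n ^ (r * m) * ENNReal.ofReal p ^ (m * r.choose 2) := by
        rw [sum_const, nsmul_eq_mul]
        gcongr
        calc (#S : ℝ≥0∞) ≤ #(univ : Finset (Fin m → Fin r → Fin n)) := by
              exact_mod_cast card_filter_le _ _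
          _ = n ^ (r * m) := by simp [pow_mul]

end TransversalFamily

lemma card_mul_eq_card_of_isKrTiling {W : Type*} [Fintype W] {G : SimpleGraph W} {r : ℕ}
    {T : Finset (Finset W)} (hT : IsKrTiling G r T) (hcover : ∀ v, ∃ t ∈ T, v ∈ t) :
    #T * r = Fintype.card W := by
  have hunion : T.biUnion id = univ := eq_univ_of_forall fun v => by
    obtain ⟨t, ht, hv⟩ := hcover v
    exact mem_biUnion.2 ⟨t, ht, hv⟩
  rw [← card_univ, ← hunion, card_biUnion hT.2]
  exact (sum_const_nat fun t ht => (hT.1 t ht).1).symm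

lemma card_filter_exists_mem_le {α : Type*} [DecidableEq α] {T : Finset (Finset α)}
    (hT : (T : Set (Finset α)).PairwiseDisjoint id) (A : Finset α) :
    #{t ∈ T | ∃ v ∈ t, v ∈ A} ≤ #A :=
  card_le_card_of_forall_subsingleton (fun t v => v ∈ t)
    (fun t ht => by
      obtain ⟨v, hv, hvA⟩ := (mem_filter.1 ht).2
      exact ⟨v, hvA, hv⟩)
    fun v _ t ht t' ht' => by
      by_contra hne
      exact disjoint_left.1 (hT (mem_filter.1 ht.1).1 (mem_filter.1 ht'.1).1 hne) ht.2 ht'.2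

section SplitGraph

variable {r n : ℕ}

lemma exists_transversal_of_isClique {H : SimpleGraph (MV r n)} (hH : IsMultipartite r n H)
    {t : Finset (MV r n)} (ht : H.IsClique (t : Set (MV r n))) (hcard : #t = r) :
    ∃ g : Fin r → Fin n, ∀ i, (i, g i) ∈ t := by
  have hinj : Set.InjOn Prod.fst (t : Set (MV r n)) := fun u hu v hv huv => by
    by_contra hne
    exact hH u v (ht hu hv hne) huv
  have himage : t.image Prod.fst = univ :=
    eq_univ_of_card _ (by rw [card_image_of_injOn hinj, hcard, Fintype.card_fin])
  have hmeets : ∀ i, ∃ x, (i, x) ∈ t := fun i => by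
    obtain ⟨v, hv, rfl⟩ := mem_image.1 (himage ▸ mem_univ i)
    exact ⟨v.2, hv⟩
  choose g hg using hmeets
  exact ⟨g, hg⟩

/-- The graph `G*_n` of the paper, with `A_i = {(i, x) | x < a}`. -/
def splitGraph (r n a : ℕ) : SimpleGraph (MV r n) where
  Adj u v := u.1 ≠ v.1 ∧ (u.2.val < a ∨ v.2.val < a)
  symm := ⟨fun _ _ h => ⟨h.1.symm, h.2.symm⟩⟩
  loopless := ⟨fun _ h => h.1 rfl⟩

lemma isMultipartite_splitGraph (a : ℕ) : IsMultipartite r n (splitGraph r n a) :=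
  fun _ _ h => h.1

lemma card_product_filter_val_lt (s : Finset (Fin r)) (a : ℕ) :
    #(s ×ˢ univ.filter (fun x : Fin n => x.val < a)) = #s * min n a := by
  rw [card_product, Fin.card_filter_val_lt]

lemma minDegCond_splitGraph {α : ℝ} (hα : α ≤ 1) :
    MinDegCond r n (splitGraph r n ⌈α * n⌉₊) (α * n) := by
  intro v j hj
  set a := ⌈α * n⌉₊
  have hsub : (({j} ×ˢ univ.filter (fun x : Fin n => x.val < a) : Finset (MV r n)) : Set (MV r n)) ⊆
      {u | u.1 = j ∧ (splitGraph r n a).Adj v u} := by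
    intro u hu
    simp only [coe_product, coe_singleton, coe_filter, mem_univ, true_and, Set.mem_prod,
      Set.mem_singleton_iff] at hu
    exact ⟨hu.1, fun h => hj (h.trans hu.1).symm, Or.inr hu.2⟩
  calc α * n ≤ min (n : ℝ) a := le_min (mul_le_of_le_one_left n.cast_nonneg hα) (Nat.le_ceil _)
    _ = #({j} ×ˢ univ.filter (fun x : Fin n => x.val < a) : Finset (MV r n)) := by
        rw [card_product_filter_val_lt, card_singleton, one_mul, Nat.cast_min]
    _ ≤ degIn r n (splitGraph r n a) v j := by
        rw [degIn, ← Set.ncard_coe_finset]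
        exact_mod_cast Set.ncard_le_ncard hsub (Set.toFinite _)

lemma mem_cliqueFamilyEvent_of_hasPerfectKrTiling (hr : 0 < r) {a : ℕ}
    {ω : Sym2 (MV r n) → Bool} (h : HasPerfectKrTiling (splitGraph r n a ⊔ sampleGraph r n ω) r) :
    ω ∈ cliqueFamilyEvent r n (n - r * a) := by
  obtain ⟨T, hT, hcover⟩ := h
  have hH : IsMultipartite r n (splitGraph r n a ⊔ sampleGraph r n ω) := by
    rintro u v (huv | huv) <;> exact huv.1
  have hTcard : #T = n := by
    have := card_mul_eq_card_of_isKrTiling hT hcover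
    rw [Fintype.card_prod, Fintype.card_fin, Fintype.card_fin, mul_comm r] at this
    exact Nat.eq_of_mul_eq_mul_right hr this
  set A : Finset (MV r n) := univ ×ˢ univ.filter (fun x : Fin n => x.val < a)
  have hgood : n - r * a ≤ #(T.filter fun t => ¬ ∃ v ∈ t, v ∈ A) := by
    have hbad := card_filter_exists_mem_le hT.2 A
    have hA : #A ≤ r * a := by
      rw [card_product_filter_val_lt, card_univ, Fintype.card_fin]
      exact Nat.mul_le_mul_left r (min_le_right n a)
    have := card_filter_add_card_filter_not (s := T) (p := fun t => ∃ v ∈ t, v ∈ A)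
    omega
  obtain ⟨S, hSgood, hScard⟩ := exists_subset_card_eq hgood
  set tile : Fin (n - r * a) → Finset (MV r n) := fun k => (S.equivFinOfCardEq hScard).symm k
  have htile : ∀ k, tile k ∈ T ∧ ¬ ∃ v ∈ tile k, v ∈ A := fun k =>
    mem_filter.1 (hSgood ((S.equivFinOfCardEq hScard).symm k).2)
  have htile_inj : Function.Injective tile := fun k l h =>
    (S.equivFinOfCardEq hScard).symm.injective (Subtype.ext h)
  choose F hF using fun k =>
    exists_transversal_of_isClique hH (hT.1 _ (htile k).1).2 (hT.1 _ (htile k).1).1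
  refine ⟨F, fun k l hkl i heq => ?_, fun e he => ?_⟩
  · exact disjoint_left.1 (hT.2 (htile k).1 (htile l).1 (htile_inj.ne hkl)) (hF k i)
      (heq ▸ hF l i)
  · obtain ⟨k, i, j, hij, rfl⟩ := mem_transversalEdges.1 he
    rcases (hT.1 _ (htile k).1).2 (hF k i) (hF k j) (by simp [hij]) with hsplit | hsample
    · rcases hsplit.2 with hlow | hlow
      · exact ((htile k).2 ⟨_, hF k i, by simpa [A] using hlow⟩).elim
      · exact ((htile k).2 ⟨_, hF k j, by simpa [A] using hlow⟩).elim
    · exact hsample.2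

end SplitGraph

lemma pow_mul_rpow_pow_choose_two {x : ℝ} (hx : 0 < x) {r : ℕ} (hr : r ≠ 0) :
    x ^ r * (x ^ (-2 / r : ℝ)) ^ r.choose 2 = x := by
  rw [← Real.rpow_natCast (x ^ _), ← Real.rpow_mul hx.le, ← Real.rpow_natCast x r,
    ← Real.rpow_add hx, Nat.cast_choose_two]
  convert Real.rpow_one x using 2
  field_simp
  ring

lemma pow_le_three_pow_mul_factorial (m : ℕ) : (m : ℝ) ^ m ≤ 3 ^ m * m ! := by
  have hexp : Real.exp m ≤ 3 ^ m := by
    rw [← Real.exp_one_pow]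
    exact pow_le_pow_left₀ (Real.exp_pos 1).le (Real.exp_one_lt_d9.trans (by norm_num)).le m
  have := (Real.pow_div_factorial_le_exp _ m.cast_nonneg m).trans hexp
  rwa [div_le_iff₀ (by positivity)] at this

lemma pow_mul_pow_choose_two_le {r n m : ℕ} (hr : 2 ≤ r) (hn : 0 < n) {c : ℝ} (hc0 : 0 ≤ c)
    (hc1 : c ≤ 1) (hcm : 6 * c * n ≤ m) :
    (n : ℝ) ^ (r * m) * (c * (n : ℝ) ^ (-2 / r : ℝ)) ^ (m * r.choose 2) ≤ (1 / 2) ^ m * m ! := by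
  have hchoose : r.choose 2 ≠ 0 := (Nat.choose_pos hr).ne'
  calc (n : ℝ) ^ (r * m) * (c * (n : ℝ) ^ (-2 / r : ℝ)) ^ (m * r.choose 2)
      = (c ^ r.choose 2 * ((n : ℝ) ^ r * ((n : ℝ) ^ (-2 / r : ℝ)) ^ r.choose 2)) ^ m := by
        rw [mul_comm m, pow_mul, pow_mul, ← mul_pow, mul_pow c, mul_left_comm]
    _ = (c ^ r.choose 2 * n) ^ m := by
        rw [pow_mul_rpow_pow_choose_two (by exact_mod_cast hn) (by omega)]
    _ ≤ (m / 6) ^ m := by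
        gcongr
        calc c ^ r.choose 2 * n ≤ c * n := by gcongr; exact pow_le_of_le_one hc0 hc1 hchoose
          _ ≤ m / 6 := by linarith
    _ = (1 / 2) ^ m * ((m : ℝ) ^ m / 3 ^ m) := by rw [← div_pow, ← mul_pow]; ring_nf
    _ ≤ (1 / 2) ^ m * m ! := by
        gcongr
        rw [div_le_iff₀ (by positivity), mul_comm]
        exact pow_le_three_pow_mul_factorial m

lemma grpMeasure_cliqueFamilyEvent_le {r n m : ℕ} (hr : 2 ≤ r) (hn : 0 < n) {p c : ℝ}
    (h0 : 0 ≤ p) (h1 : p ≤ 1) (hc0 : 0 ≤ c) (hc1 : c ≤ 1) (hp : p ≤ c * (n : ℝ) ^ (-2 / r : ℝ))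
    (hcm : 6 * c * n ≤ m) :
    grpMeasure r n p (cliqueFamilyEvent r n m) ≤ ENNReal.ofReal ((1 / 2) ^ m) := by
  rw [← ENNReal.mul_le_mul_iff_right (a := (m ! : ℝ≥0∞)) (by positivity) (by simp)]
  calc (m ! : ℝ≥0∞) * grpMeasure r n p (cliqueFamilyEvent r n m)
      ≤ n ^ (r * m) * ENNReal.ofReal p ^ (m * r.choose 2) :=
        factorial_mul_grpMeasure_cliqueFamilyEvent_le (by omega) h0 h1
    _ ≤ ENNReal.ofReal ((n : ℝ) ^ (r * m) * (c * (n : ℝ) ^ (-2 / r : ℝ)) ^ (m * r.choose 2)) := by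
        rw [ENNReal.ofReal_mul (by positivity), ENNReal.ofReal_pow (by positivity),
          ENNReal.ofReal_pow (by positivity), ENNReal.ofReal_natCast]
        gcongr
    _ ≤ ENNReal.ofReal ((1 / 2) ^ m * m !) :=
        ENNReal.ofReal_le_ofReal (pow_mul_pow_choose_two_le hr hn hc0 hc1 hcm)
    _ = m ! * ENNReal.ofReal ((1 / 2) ^ m) := by
        rw [ENNReal.ofReal_mul (by positivity), ENNReal.ofReal_natCast, mul_comm]

lemma eventually_le_sub_mul_ceil {r : ℕ} {α : ℝ} (hα : 0 ≤ α) (hγ : 0 < 1 - r * α) :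
    ∀ᶠ n : ℕ in atTop, (1 - r * α) * n / 2 ≤ ((n - r * ⌈α * n⌉₊ : ℕ) : ℝ) := by
  filter_upwards [eventually_ge_atTop ⌈2 * r / (1 - r * α)⌉₊] with n hn
  have hn' : 2 * r / (1 - r * α) ≤ n := Nat.ceil_le.1 hn
  rw [div_le_iff₀ hγ] at hn'
  have hceil : (r : ℝ) * ⌈α * n⌉₊ ≤ r * (α * n + 1) :=
    mul_le_mul_of_nonneg_left (Nat.ceil_lt_add_one (by positivity)).le r.cast_nonneg
  have hle : r * ⌈α * n⌉₊ ≤ n := by exact_mod_cast (by nlinarith : (r : ℝ) * ⌈α * n⌉₊ ≤ n)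
  rw [Nat.cast_sub hle, Nat.cast_mul]
  nlinarith

theorem statement1 (r : ℕ) (hr : 3 ≤ r) (α : ℝ) (hα0 : 0 < α) (hα1 : α < 1 / r) :
    ∃ c : ℝ, 0 < c ∧
      ∃ G : (n : ℕ) → SimpleGraph (MV r n),
        (∀ n, IsMultipartite r n (G n)) ∧
        (∀ n, MinDegCond r n (G n) (α * n)) ∧
        ∀ p : ℕ → ℝ, (∀ n, 0 ≤ p n) → (∀ n, p n ≤ 1) →
          (∀ n : ℕ, p n ≤ c * (n : ℝ) ^ (-(2 : ℝ) / r)) →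
          Tendsto (fun n => grpMeasure r n (p n)
              {ω | ¬ HasPerfectKrTiling ((G n) ⊔ sampleGraph r n ω) r})
            atTop (nhds 1) := by
  have hrpos : (0 : ℝ) < r := by exact_mod_cast (by omega : 0 < r)
  have hγ : 0 < 1 - r * α := by
    rw [lt_div_iff₀ hrpos] at hα1
    linarith
  have hα : α ≤ 1 := hα1.le.trans (div_le_one_of_le₀ (by exact_mod_cast (by omega : 1 ≤ r))
    hrpos.le)
  refine ⟨(1 - r * α) / 12, by positivity, fun n => splitGraph r n ⌈α * n⌉₊,
    fun n => isMultipartite_splitGraph _, fun n => minDegCond_splitGraph hα,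
    fun p hp0 hp1 hpc => ?_⟩
  have hm := eventually_le_sub_mul_ceil hα0.le hγ
  have hm_top : Tendsto (fun n : ℕ => n - r * ⌈α * n⌉₊) atTop atTop := by
    refine tendsto_natCast_atTop_iff.1 (tendsto_atTop_mono' _ hm ?_)
    exact (tendsto_natCast_atTop_atTop.const_mul_atTop hγ).atTop_div_const two_pos
  have htiling : Tendsto (fun n => grpMeasure r n (p n)
      {ω | HasPerfectKrTiling (splitGraph r n ⌈α * n⌉₊ ⊔ sampleGraph r n ω) r}) atTop (nhds 0) := by
    have hhalf := (ENNReal.tendsto_ofReal (tendsto_pow_atTop_nhds_zero_of_lt_one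
      (by norm_num : (0 : ℝ) ≤ 1 / 2) (by norm_num))).comp hm_top
    rw [ENNReal.ofReal_zero] at hhalf
    refine tendsto_of_tendsto_of_tendsto_of_le_of_le' tendsto_const_nhds hhalf
      (Eventually.of_forall fun _ => zero_le) ?_
    filter_upwards [hm, eventually_gt_atTop 0] with n hmn hn
    refine (measure_mono fun ω => mem_cliqueFamilyEvent_of_hasPerfectKrTiling (by omega)).trans ?_
    exact grpMeasure_cliqueFamilyEvent_le (by omega) hn (hp0 n) (hp1 n) (by positivity)
      (by linarith [mul_pos hrpos hα0]) (hpc n) (by linarith)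
  have hcompl : ∀ n, grpMeasure r n (p n)
      {ω | ¬ HasPerfectKrTiling (splitGraph r n ⌈α * n⌉₊ ⊔ sampleGraph r n ω) r} =
      1 - grpMeasure r n (p n)
        {ω | HasPerfectKrTiling (splitGraph r n ⌈α * n⌉₊ ⊔ sampleGraph r n ω) r} := fun n => by
    have := isProbabilityMeasure_grpMeasure r n (hp0 n) (hp1 n)
    exact prob_compl_eq_one_sub ((Set.toFinite _).measurableSet)
  simp_rw [hcompl]
  simpa using ENNReal.Tendsto.sub tendsto_const_nhds htiling (Or.inl ENNReal.one_ne_top)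
end

section
/- Let r ≥ 3 and let ε, d > 0 with ε ≤ (d/2)^{r−2}. Let G be a balanced r-partite graph on V_1 ⊔ ⋯ ⊔ V_r with |V_i| = n for all i, such that (V_1, V_i) is (ε, d)-super-regular for all i ∈ {2, …, r}. Let F = F_{V_1}[V_2, …, V_r] be the (r−1)-uniform (r−1)-partite hypergraph on vertex classes V_2, …, V_r in which a tuple (v_2, …, v_r) ∈ V_2 × ⋯ × V_r is an edge iff v_2, …, v_r have at least (d/2)^{r−1}·|V_1| common neighbors in V_1. Then the minimum degree of F (the minimum, over vertices v, of the number of edges of F containing v) is at least (1 − (r−2)ε)·n^{r−2}. -/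
open MeasureTheory Filter Finset
open scoped Classical

/-!
Fix `v ∈ V_{j₀}` and consider the box of tuples with `j₀`-th entry `v`. Adding the remaining
coordinates `k` one at a time, keep track of the tuples whose chosen coordinates have at least
`(d/2)^{|S|+1} n` common neighbours in `V₁`. Initially this is the whole box, since `v` has more
than `dn` neighbours in `V₁`. When a coordinate `k` is added, fix all other coordinates: their
common neighbourhood `X` has at least `(d/2)^{r-2} n ≥ εn` vertices, so by regularity of
`(V₁, V_k)` fewer than `εn` choices of the `k`-th entry have at most `d|X|` neighbours in `X`.
Hence each of the `r - 2` steps loses at most an `ε`-fraction of the `n^{r-2}` tuples.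
-/

lemma Finset.ncard_setOf_mem_and {α : Type*} (s : Finset α) (p : α → Prop) [DecidablePred p] :
    {x | x ∈ s ∧ p x}.ncard = #(s.filter p) := by
  rw [← Set.ncard_coe_finset, coe_filter]

section Density

variable {α β : Type*} {R : α → β → Prop}

lemma ncard_relPairs_eq_sum (s : Finset α) (t : Finset β) :
    ({p : α × β | p.1 ∈ s ∧ p.2 ∈ t ∧ R p.1 p.2}.ncard : ℝ) = ∑ b ∈ t, (#(s.filter (R · b)) : ℝ) := by
  have hset : {p : α × β | p.1 ∈ s ∧ p.2 ∈ t ∧ R p.1 p.2} = {p | p ∈ s ×ˢ t ∧ R p.1 p.2} := by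
    ext p
    simp only [Set.mem_ofPred_eq, mem_product, and_assoc]
  rw [hset, Finset.ncard_setOf_mem_and, card_filter, sum_product_right]
  push_cast
  simp only [card_filter, Nat.cast_sum, Nat.cast_ite, Nat.cast_one, Nat.cast_zero]

lemma relDensity_le_of_forall_card_filter_le {s : Finset α} {t : Finset β} {c : ℝ} (hc : 0 ≤ c)
    (h : ∀ b ∈ t, (#(s.filter (R · b)) : ℝ) ≤ c * #s) : relDensity R s t ≤ c := by
  rw [relDensity, ncard_relPairs_eq_sum]
  refine div_le_of_le_mul₀ (by positivity) hc ?_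
  calc ∑ b ∈ t, (#(s.filter (R · b)) : ℝ) ≤ ∑ _b ∈ t, c * #s := sum_le_sum h
    _ = c * (#s * #t) := by rw [sum_const, nsmul_eq_mul]; ring

lemma IsSuperRegularR.card_lowDegree_lt {ε d : ℝ} {s : Finset α} {t : Finset β}
    (hreg : IsSuperRegularR R ε d s t) (hd : 0 ≤ d) {X : Finset α} (hXs : X ⊆ s)
    (hX : ε * #s ≤ #X) :
    (#(t.filter fun b => (#(X.filter (R · b)) : ℝ) ≤ d * #X) : ℝ) < ε * #t := by
  by_contra! hY
  have hdense := hreg.1 X hXs _ (filter_subset _ t) hX hY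
  have hsparse : relDensity R X (t.filter fun b => (#(X.filter (R · b)) : ℝ) ≤ d * #X) ≤ d :=
    relDensity_le_of_forall_card_filter_le hd fun b hb => (mem_filter.1 hb).2
  linarith

lemma IsSuperRegularR.lt_one {ε d : ℝ} {s : Finset α} {t : Finset β}
    (hreg : IsSuperRegularR R ε d s t) {b : β} (hb : b ∈ t) : d < 1 := by
  have hdeg := hreg.2.2 b hb
  rw [Finset.ncard_setOf_mem_and] at hdeg
  have hle : (#(s.filter (R · b)) : ℝ) ≤ 1 * #s := by
    rw [one_mul]
    exact_mod_cast card_filter_le _ _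
  exact lt_of_mul_lt_mul_right (hdeg.trans_le hle) (Nat.cast_nonneg _)

end Density

section CommonNeighbourhood

variable {α β ι : Type*} [Fintype ι] [DecidableEq ι] (R : α → β → Prop) (A : Finset α)

noncomputable def commonNbhd (S : Finset ι) (g : ι → β) : Finset α :=
  A.filter fun a => ∀ k ∈ S, R a (g k)

variable {R A}

lemma commonNbhd_insert (k : ι) (S : Finset ι) (g : ι → β) :
    commonNbhd R A (insert k S) g = (commonNbhd R A S g).filter (R · (g k)) := by
  ext a
  simp only [commonNbhd, mem_filter, forall_mem_insert]
  tauto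

lemma commonNbhd_congr {S : Finset ι} {g g' : ι → β} (h : ∀ k ∈ S, g k = g' k) :
    commonNbhd R A S g = commonNbhd R A S g' :=
  filter_congr fun _ _ => forall₂_congr fun k hk => by rw [h k hk]

lemma commonNbhd_singleton (k : ι) (g : ι → β) :
    commonNbhd R A {k} g = A.filter (R · (g k)) := by
  simp only [commonNbhd, mem_singleton, forall_eq]

variable (R A)

noncomputable def richTuples (T : ι → Finset β) (S : Finset ι) (θ : ℝ) : Finset (ι → β) :=
  (Fintype.piFinset T).filter fun g => θ ≤ #(commonNbhd R A S g)

variable {R A}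

lemma richTuples_singleton {T : ι → Finset β} {k : ι} {b : β} (hT : T k = {b}) {θ : ℝ}
    (hθ : θ ≤ #(A.filter (R · b))) : richTuples R A T {k} θ = Fintype.piFinset T := by
  refine filter_true_of_mem fun g hg => ?_
  have hgk : g k = b := mem_singleton.1 (hT ▸ Fintype.mem_piFinset.1 hg k)
  rwa [commonNbhd_singleton, hgk]

lemma card_fibre_le_card_lowDegree {T : ι → Finset β} {S : Finset ι} {k : ι} (hk : k ∉ S)
    {θ' : ℝ} {B : Finset (ι → β)} (hBT : B ⊆ Fintype.piFinset T)
    (hB : ∀ g ∈ B, (#(commonNbhd R A (insert k S) g) : ℝ) < θ') (g₀ : ι → β) :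
    #(B.filter fun g => ∀ j ≠ k, g j = g₀ j) ≤
      #((T k).filter fun b => (#((commonNbhd R A S g₀).filter (R · b)) : ℝ) < θ') := by
  refine card_le_card_of_injOn (· k) (fun g hg => ?_) (fun g hg g' hg' hkk => ?_)
  · obtain ⟨hgB, hg₀⟩ := mem_filter.1 hg
    have hS : commonNbhd R A S g = commonNbhd R A S g₀ :=
      commonNbhd_congr fun j hj => hg₀ j (ne_of_mem_of_not_mem hj hk)
    refine mem_filter.2 ⟨Fintype.mem_piFinset.1 (hBT hgB) k, ?_⟩
    simpa only [commonNbhd_insert, hS] using hB g hgB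
  · obtain ⟨-, hg⟩ := mem_filter.1 hg
    obtain ⟨-, hg'⟩ := mem_filter.1 hg'
    funext j
    by_cases hj : j = k
    · subst hj; exact hkk
    · rw [hg j hj, hg' j hj]

lemma card_filter_not_le_card_commonNbhd_insert_le {T : ι → Finset β} {S : Finset ι} {k : ι}
    (hk : k ∉ S) {θ θ' ε : ℝ} (hε : 0 ≤ ε)
    (hlow : ∀ X ⊆ A, θ ≤ #X →
      (#((T k).filter fun b => (#(X.filter (R · b)) : ℝ) < θ') : ℝ) ≤ ε * #(T k)) :
    (#((richTuples R A T S θ).filter fun g => ¬θ' ≤ (#(commonNbhd R A (insert k S) g) : ℝ))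
      : ℝ) ≤ ε * #(Fintype.piFinset T) := by
  set B := (richTuples R A T S θ).filter
    fun g => ¬θ' ≤ (#(commonNbhd R A (insert k S) g) : ℝ)
  have hBT : B ⊆ Fintype.piFinset T := (filter_subset _ _).trans (filter_subset _ _)
  -- Within a fibre of the restriction to the coordinates other than `k`, the common
  -- neighbourhood over `S` is fixed, so the bad tuples inject into low-degree vertices of `T k`.
  let ρ : (ι → β) → ({j // j ≠ k} → β) := fun g j => g j
  have hρ : (B : Set (ι → β)).MapsTo ρ (Fintype.piFinset fun j : {j // j ≠ k} => T j) :=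
    fun g hg => Fintype.mem_piFinset.2 fun j => Fintype.mem_piFinset.1 (hBT hg) j
  have hfibre : ∀ g', (#(B.filter (ρ · = g')) : ℝ) ≤ ε * #(T k) := by
    intro g'
    rcases (B.filter (ρ · = g')).eq_empty_or_nonempty with hempty | ⟨g₀, hg₀⟩
    · rw [hempty, card_empty, Nat.cast_zero]
      positivity
    obtain ⟨hg₀B, rfl⟩ := mem_filter.1 hg₀
    have hfib : B.filter (ρ · = ρ g₀) = B.filter fun g => ∀ j ≠ k, g j = g₀ j :=
      filter_congr fun g _ => by simp only [ρ, funext_iff, Subtype.forall]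
    rw [hfib]
    refine le_trans ?_ (hlow _ (filter_subset _ A) (mem_filter.1 (mem_filter.1 hg₀B).1).2)
    have hinj := card_fibre_le_card_lowDegree (R := R) (A := A) (B := B) (θ' := θ') hk
      hBT (fun g hg => not_le.1 (mem_filter.1 hg).2) g₀
    exact_mod_cast hinj
  rw [card_eq_sum_card_fiberwise hρ]
  push_cast
  calc _ ≤ ∑ _g' ∈ Fintype.piFinset (fun j : {j // j ≠ k} => T j), ε * #(T k) :=
        sum_le_sum fun g' _ => hfibre g'
    _ = ε * #(Fintype.piFinset T) := by
        rw [sum_const, nsmul_eq_mul, Fintype.card_piFinset, Fintype.card_piFinset,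
          Fintype.prod_eq_mul_prod_subtype_ne _ k]
        push_cast
        ring

theorem card_richTuples_le_card_richTuples_insert_add {T : ι → Finset β} {S : Finset ι} {k : ι}
    (hk : k ∉ S) {θ θ' ε : ℝ} (hε : 0 ≤ ε)
    (hlow : ∀ X ⊆ A, θ ≤ #X →
      (#((T k).filter fun b => (#(X.filter (R · b)) : ℝ) < θ') : ℝ) ≤ ε * #(T k)) :
    (#(richTuples R A T S θ) : ℝ) ≤
      #(richTuples R A T (insert k S) θ') + ε * #(Fintype.piFinset T) := by
  set P := richTuples R A T S θ
  have hgood : P.filter (fun g => θ' ≤ (#(commonNbhd R A (insert k S) g) : ℝ)) ⊆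
      richTuples R A T (insert k S) θ' :=
    fun g hg => mem_filter.2 ⟨(filter_subset _ _) (mem_filter.1 hg).1, (mem_filter.1 hg).2⟩
  have hsplit := card_filter_add_card_filter_not (s := P)
    fun g => θ' ≤ (#(commonNbhd R A (insert k S) g) : ℝ)
  have hP : #P ≤ #(richTuples R A T (insert k S) θ') +
      #(P.filter fun g => ¬θ' ≤ (#(commonNbhd R A (insert k S) g) : ℝ)) := by
    have := card_le_card hgood
    omega
  have hP' := (Nat.cast_le (α := ℝ)).2 hP
  push_cast at hP'
  linarith [card_filter_not_le_card_commonNbhd_insert_le hk hε hlow]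

theorem card_richTuples_union_ge {T : ι → Finset β} {S₀ U : Finset ι} (hU : Disjoint S₀ U)
    (θ : ℕ → ℝ) {ε : ℝ} (hε : 0 ≤ ε)
    (hlow : ∀ k ∈ U, ∀ i < #U, ∀ X ⊆ A, θ i ≤ #X →
      (#((T k).filter fun b => (#(X.filter (R · b)) : ℝ) < θ (i + 1)) : ℝ) ≤ ε * #(T k)) :
    ∀ S ⊆ U, (#(richTuples R A T S₀ (θ 0)) : ℝ) - #S * ε * #(Fintype.piFinset T) ≤
      #(richTuples R A T (S₀ ∪ S) (θ #S)) := by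
  intro S
  induction S using Finset.induction_on with
  | empty => simp
  | insert k S hkS ih =>
    intro hsub
    have hkU : k ∈ U := hsub (mem_insert_self k S)
    have hSU : #S < #U := by
      simpa only [card_insert_of_notMem hkS, Nat.add_one_le_iff] using card_le_card hsub
    have hk : k ∉ S₀ ∪ S := by
      simp only [mem_union, hkS, or_false]
      exact disjoint_right.1 hU hkU
    have hstep := card_richTuples_le_card_richTuples_insert_add hk hε (hlow k hkU #S hSU)
    rw [union_insert, card_insert_of_notMem hkS]
    push_cast
    linarith [ih ((subset_insert k S).trans hsub)]

end CommonNeighbourhood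

section Multipartite

variable {r n : ℕ}

lemma card_classFinset {i : ℕ} (hi : i < r) : #(classFinset r n i) = n := by
  have h : classFinset r n i = {(⟨i, hi⟩ : Fin r)} ×ˢ (univ : Finset (Fin n)) := by
    ext u
    simp only [classFinset, mem_filter, mem_univ, true_and, mem_product, mem_singleton, and_true,
      Fin.ext_iff]
  rw [h, card_product, card_singleton, card_univ, Fintype.card_fin, one_mul]

lemma mem_classFinset_fst (v : MV r n) : v ∈ classFinset r n v.1.val := by
  simp [classFinset]

lemma card_nonzero_fin (r : ℕ) : Fintype.card {k : Fin r // k.val ≠ 0} = r - 1 := by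
  cases r with
  | zero => rfl
  | succ r =>
    simp only [Fintype.card_subtype_compl, Fin.val_eq_zero_iff, Fintype.card_unique,
      Fintype.card_fin, Nat.add_sub_cancel]

/-- The factors of the box of tuples in `V₂ × ⋯ × Vᵣ` with `j₀`-th entry `v`. -/
noncomputable def tupleBox (v : MV r n) (j₀ k : {k : Fin r // k.val ≠ 0}) : Finset (MV r n) :=
  if k = j₀ then {v} else classFinset r n k.1

variable {v : MV r n} {j₀ : {k : Fin r // k.val ≠ 0}}

lemma tupleBox_self : tupleBox v j₀ j₀ = {v} := if_pos rfl

lemma card_piFinset_tupleBox : #(Fintype.piFinset (tupleBox v j₀)) = n ^ (r - 2) := by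
  have hcard (k) : #(tupleBox v j₀ k) = if k = j₀ then 1 else n := by
    unfold tupleBox
    split_ifs
    · exact card_singleton v
    · exact card_classFinset k.1.2
  rw [Fintype.card_piFinset, Finset.prod_congr rfl fun k _ => hcard k, prod_ite, filter_ne',
    prod_const_one, one_mul, prod_const, card_erase_of_mem (mem_univ _), card_univ,
    card_nonzero_fin, Nat.sub_sub]

lemma fst_eq_of_mem_tupleBox (hv : v.1 = j₀.1) {k} {x : MV r n} (hx : x ∈ tupleBox v j₀ k) :
    x.1 = k.1 := by
  unfold tupleBox at hx
  split_ifs at hx with hk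
  · rw [mem_singleton.1 hx, hv, hk]
  · exact (mem_filter.1 hx).2 |> Fin.ext

variable {ε d : ℝ} {G : SimpleGraph (MV r n)}

lemma mul_lt_card_filter_adj
    (hsr : IsSuperRegularR G.Adj ε d (classFinset r n 0) (classFinset r n v.1.val)) :
    d * n < #((classFinset r n 0).filter (G.Adj · v)) := by
  have h := hsr.2.2 v (mem_classFinset_fst v)
  rwa [Finset.ncard_setOf_mem_and, card_classFinset (Fin.pos v.1)] at h

lemma card_tupleBox_lowDegree_le (hd : 0 < d) (hd2 : d ≤ 2) (hεd : ε ≤ (d / 2) ^ (r - 2))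
    (hsr : ∀ i : Fin r, i.val ≠ 0 →
      IsSuperRegularR G.Adj ε d (classFinset r n 0) (classFinset r n i.val))
    {k : {k : Fin r // k.val ≠ 0}} (hk : k ≠ j₀) {i : ℕ} (hi : i + 1 ≤ r - 2)
    {X : Finset (MV r n)} (hX : X ⊆ classFinset r n 0) (hXθ : (d / 2) ^ (i + 1) * n ≤ #X) :
    (#((tupleBox v j₀ k).filter fun b => (#(X.filter (G.Adj · b)) : ℝ) < (d / 2) ^ (i + 1 + 1) * n)
      : ℝ) ≤ ε * #(tupleBox v j₀ k) := by
  rw [tupleBox, if_neg hk]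
  have hpow : (d / 2) ^ (r - 2) ≤ (d / 2) ^ (i + 1) :=
    pow_le_pow_of_le_one (by positivity) (by linarith) hi
  have hXlarge : ε * #(classFinset r n 0) ≤ #X := by
    rw [card_classFinset (Fin.pos k.1)]
    calc ε * n ≤ (d / 2) ^ (i + 1) * n := by gcongr; linarith
      _ ≤ #X := hXθ
  have hsub : ((classFinset r n k.1).filter fun b =>
        (#(X.filter (G.Adj · b)) : ℝ) < (d / 2) ^ (i + 1 + 1) * n) ⊆
      (classFinset r n k.1).filter fun b => (#(X.filter (G.Adj · b)) : ℝ) ≤ d * #X := by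
    refine monotone_filter_right _ fun b _ hb => hb.le.trans ?_
    calc (d / 2) ^ (i + 1 + 1) * n = d / 2 * ((d / 2) ^ (i + 1) * n) := by ring
      _ ≤ d / 2 * #X := by gcongr
      _ ≤ d * #X := by gcongr; linarith
  calc _ ≤ (#((classFinset r n k.1).filter fun b => (#(X.filter (G.Adj · b)) : ℝ) ≤ d * #X)
        : ℝ) := by exact_mod_cast card_le_card hsub
    _ ≤ ε * #(classFinset r n k.1) :=
      ((hsr k.1 k.2).card_lowDegree_lt hd.le hX hXlarge).le

lemma coe_richTuples_univ_subset (hv : v.1 = j₀.1) :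
    (richTuples G.Adj (classFinset r n 0) (tupleBox v j₀) univ ((d / 2) ^ (r - 1) * n) :
      Set _) ⊆ {g | IsTupleF r n G d g ∧ ∃ k, g k = v} := by
  intro g hg
  obtain ⟨hbox, hrich⟩ := mem_filter.1 hg
  have hbox := Fintype.mem_piFinset.1 hbox
  refine ⟨⟨fun k => fst_eq_of_mem_tupleBox hv (hbox k), ?_⟩, j₀, ?_⟩
  · have hset : {u : MV r n | u.1.val = 0 ∧ ∀ k, G.Adj u (g k)} =
        commonNbhd G.Adj (classFinset r n 0) univ g := by
      ext u
      simp [commonNbhd, classFinset]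
    rwa [hset, Set.ncard_coe_finset]
  · simpa only [tupleBox_self, mem_singleton] using hbox j₀

end Multipartite

theorem statement10_general (r n : ℕ) (hr : 3 ≤ r) (ε d : ℝ) (hε : 0 < ε) (hd : 0 < d)
    (hεd : ε ≤ (d / 2) ^ (r - 2))
    (G : SimpleGraph (MV r n))
    (hsr : ∀ i : Fin r, i.val ≠ 0 →
      IsSuperRegularR G.Adj ε d (classFinset r n 0) (classFinset r n i.val)) :
    -- every vertex of V_2 ∪ ⋯ ∪ V_r lies in at least (1 − (r−2)ε)·n^{r−2} edges of F
    ∀ v : MV r n, v.1.val ≠ 0 →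
      (1 - ((r : ℝ) - 2) * ε) * (n : ℝ) ^ (r - 2) ≤
        (Set.ncard {g : {k : Fin r // k.val ≠ 0} → MV r n |
          IsTupleF r n G d g ∧ ∃ k, g k = v} : ℝ) := by
  intro v hv
  set j₀ : {k : Fin r // k.val ≠ 0} := ⟨v.1, hv⟩
  have hdeg := mul_lt_card_filter_adj (hsr v.1 hv)
  have hd1 := (hsr v.1 hv).lt_one (mem_classFinset_fst v)
  have hU : #(univ.erase j₀) = r - 2 := by
    rw [card_erase_of_mem (mem_univ _), card_univ, card_nonzero_fin]
    omega
  have key := card_richTuples_union_ge (R := G.Adj) (A := classFinset r n 0)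
    (T := tupleBox v j₀) (disjoint_singleton_left.2 (notMem_erase j₀ univ))
    (fun i => (d / 2) ^ (i + 1) * n) hε.le
    (fun k hk i hi X hX hXθ => card_tupleBox_lowDegree_le hd (by linarith) hεd hsr
      (ne_of_mem_erase hk) (by omega) hX hXθ) _ subset_rfl
  rw [richTuples_singleton tupleBox_self (by linarith), card_piFinset_tupleBox, hU,
    ← insert_eq, insert_erase (mem_univ _), show r - 2 + 1 = r - 1 by omega] at key
  calc (1 - ((r : ℝ) - 2) * ε) * (n : ℝ) ^ (r - 2)
      ≤ #(richTuples G.Adj (classFinset r n 0) (tupleBox v j₀) univ ((d / 2) ^ (r - 1) * n)) := by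
        rw [Nat.cast_sub (by omega : 2 ≤ r)] at key
        push_cast at key ⊢
        linarith
    _ ≤ _ := by
        rw [← Set.ncard_coe_finset]
        exact_mod_cast Set.ncard_le_ncard (coe_richTuples_univ_subset rfl) (Set.toFinite _)

theorem statement10 (r n : ℕ) (hr : 3 ≤ r) (ε d : ℝ) (hε : 0 < ε) (hd : 0 < d)
    (hεd : ε ≤ (d / 2) ^ (r - 2))
    (G : SimpleGraph (MV r n)) (hGpart : IsMultipartite r n G)
    (hsr : ∀ i : Fin r, i.val ≠ 0 →
      IsSuperRegularR G.Adj ε d (classFinset r n 0) (classFinset r n i.val)) :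
    -- every vertex of V_2 ∪ ⋯ ∪ V_r lies in at least (1 − (r−2)ε)·n^{r−2} edges of F
    ∀ v : MV r n, v.1.val ≠ 0 →
      (1 - ((r : ℝ) - 2) * ε) * (n : ℝ) ^ (r - 2) ≤
        (Set.ncard {g : {k : Fin r // k.val ≠ 0} → MV r n |
          IsTupleF r n G d g ∧ ∃ k, g k = v} : ℝ) :=
  statement10_general r n hr ε d hε hd hεd G hsr
end
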